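/- Let A be a nonempty bounded subset of ℝ^N, δ > 0, and s ∈ ℂ with Re(s) > dim_B̄(A). Then the distance zeta function ζ_A(s) := ∫_{A_δ} d(x,A)^{s-N} dx converges absolutely (i.e., ∫_{A_δ} d(x,A)^{Re(s)-N} dx < ∞). -/

import Mathlib

open MeasureTheory Metric Filter Set Topology

/-- The upper `r`-dimensional Minkowski content of `A ⊆ ℝ^N`:
`limsup_{t→0+} |A_t| / t^(N-r)`. -/
noncomputable def upperMinkowskiContent (N : ℕ) (A : Set (EuclideanSpace ℝ (Fin N)))
    (r : ℝ) : ENNReal :=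
  Filter.limsup
    (fun t : ℝ => volume (Metric.thickening t A) / ENNReal.ofReal (t ^ ((N : ℝ) - r)))
    (nhdsWithin 0 (Set.Ioi 0))

/-- The upper box (Minkowski) dimension of `A ⊆ ℝ^N`. -/
noncomputable def upperBoxDim (N : ℕ) (A : Set (EuclideanSpace ℝ (Fin N))) : ℝ :=
  sInf {r : ℝ | upperMinkowskiContent N A r = 0}

/-! Below the box dimension, `|A_t| ≤ t^(N-r)` for small `t` and some `r < Re s`. For
`β = Re s - N < 0` the layer-cake formula writes the integral of `d(x,A)^β` as
`∫₀^∞ |{d(x,A)^β > t}| dt`; the superlevel set `{d(x,A)^β > t}` lies in the thickening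
`A_{t^(1/β)}`, of measure at most `t^((N-r)/β)`, and `(N-r)/β < -1` makes the tail integrable.
For `β ≥ 0` the integrand is bounded on `A_δ`. -/

section InfDist

variable {X : Type*} [PseudoMetricSpace X] {A : Set X} {x : X} {δ : ℝ}

theorem Metric.infDist_lt_of_mem_thickening (hx : x ∈ thickening δ A) : infDist x A < δ := by
  rcases A.eq_empty_or_nonempty with rfl | hA
  · simp at hx
  · exact (mem_thickening_iff_infDist_lt hA).mp hx

theorem Metric.mem_thickening_of_infDist_pos_of_lt (h₀ : 0 < infDist x A)
    (h : infDist x A < δ) : x ∈ thickening δ A := by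
  rcases A.eq_empty_or_nonempty with rfl | hA
  · simp at h₀
  · exact (mem_thickening_iff_infDist_lt hA).mpr h

theorem Metric.setOf_lt_infDist_rpow_subset_thickening {β t : ℝ} (hβ : β < 0) (ht : 0 < t) :
    {x | t < infDist x A ^ β} ⊆ thickening (t ^ β⁻¹) A := by
  intro x hx
  have hpos : 0 < infDist x A := by
    refine infDist_nonneg.lt_of_ne fun h ↦ ?_
    rw [Set.mem_ofPred_eq, ← h, Real.zero_rpow hβ.ne] at hx
    exact ht.not_gt hx
  exact mem_thickening_of_infDist_pos_of_lt hpos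
    ((Real.lt_rpow_inv_iff_of_neg hpos ht hβ).mpr hx)

end InfDist

section DistanceIntegral

variable {X : Type*} [PseudoMetricSpace X] [MeasurableSpace X] {μ : Measure X} {A : Set X}
  {δ β : ℝ}

theorem lintegral_thickening_infDist_rpow_lt_top_of_nonneg (hδ : μ (thickening δ A) < ⊤)
    (hβ : 0 ≤ β) : ∫⁻ x in thickening δ A, ENNReal.ofReal (infDist x A ^ β) ∂μ < ⊤ := by
  have hbound : ∀ x ∈ thickening δ A,
      ENNReal.ofReal (infDist x A ^ β) ≤ ENNReal.ofReal (δ ^ β) :=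
    fun x hx ↦ ENNReal.ofReal_le_ofReal <|
      Real.rpow_le_rpow infDist_nonneg (infDist_lt_of_mem_thickening hx).le hβ
  calc ∫⁻ x in thickening δ A, ENNReal.ofReal (infDist x A ^ β) ∂μ
      ≤ ∫⁻ _ in thickening δ A, ENNReal.ofReal (δ ^ β) ∂μ :=
        setLIntegral_mono measurable_const hbound
    _ = ENNReal.ofReal (δ ^ β) * μ (thickening δ A) := setLIntegral_const _ _
    _ < ⊤ := ENNReal.mul_lt_top ENNReal.ofReal_lt_top hδ

theorem measure_setOf_lt_infDist_rpow_le {p t₀ t : ℝ} (hβ : β < 0)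
    (hvol : ∀ τ ∈ Ioo 0 t₀, μ (thickening τ A) ≤ ENNReal.ofReal (τ ^ p))
    (ht₀ : 0 < t₀) (ht : t₀ ^ β < t) :
    μ {x | t < infDist x A ^ β} ≤ ENNReal.ofReal (t ^ (β⁻¹ * p)) := by
  have htpos : 0 < t := (Real.rpow_pos_of_pos ht₀ β).trans ht
  calc μ {x | t < infDist x A ^ β}
      ≤ μ (thickening (t ^ β⁻¹) A) :=
        measure_mono (setOf_lt_infDist_rpow_subset_thickening hβ htpos)
    _ ≤ ENNReal.ofReal ((t ^ β⁻¹) ^ p) :=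
      hvol _ ⟨Real.rpow_pos_of_pos htpos _,
        (Real.rpow_inv_lt_iff_of_neg htpos ht₀ hβ).mpr ht⟩
    _ = ENNReal.ofReal (t ^ (β⁻¹ * p)) := by rw [Real.rpow_mul htpos.le]

theorem lintegral_thickening_infDist_rpow_lt_top_of_neg [OpensMeasurableSpace X] {p : ℝ}
    (hδ : μ (thickening δ A) < ⊤) (hβ : β < 0) (hβp : 0 < β + p)
    (hvol : ∀ᶠ t in 𝓝[>] 0, μ (thickening t A) ≤ ENNReal.ofReal (t ^ p)) :
    ∫⁻ x in thickening δ A, ENNReal.ofReal (infDist x A ^ β) ∂μ < ⊤ := by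
  obtain ⟨t₀, ht₀, hvol⟩ := mem_nhdsGT_iff_exists_Ioo_subset.mp hvol
  have ht₀ : 0 < t₀ := ht₀
  set ν := μ.restrict (thickening δ A)
  set lam := t₀ ^ β
  have hlam : 0 < lam := Real.rpow_pos_of_pos ht₀ β
  have hq : β⁻¹ * p < -1 := by
    rw [inv_mul_eq_div, div_lt_iff_of_neg hβ]
    linarith
  rw [lintegral_eq_lintegral_meas_lt ν (ae_of_all _ fun _ ↦ Real.rpow_nonneg infDist_nonneg β)
      ((continuous_infDist_pt A).measurable.pow_const β).aemeasurable,
    ← Ioc_union_Ioi_eq_Ioi hlam.le, lintegral_union measurableSet_Ioi Ioc_disjoint_Ioi_same]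
  refine ENNReal.add_lt_top.mpr ⟨?_, ?_⟩
  · calc ∫⁻ t in Ioc 0 lam, ν {x | t < infDist x A ^ β}
        ≤ ∫⁻ _ in Ioc 0 lam, ν univ :=
          setLIntegral_mono measurable_const fun _ _ ↦ measure_mono (subset_univ _)
      _ = ν univ * volume (Ioc 0 lam) := setLIntegral_const _ _
      _ < ⊤ :=
        ENNReal.mul_lt_top (by rwa [Measure.restrict_apply_univ]) (by simp [Real.volume_Ioc])
  · calc ∫⁻ t in Ioi lam, ν {x | t < infDist x A ^ β}
        ≤ ∫⁻ t in Ioi lam, ENNReal.ofReal (t ^ (β⁻¹ * p)) :=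
          setLIntegral_mono (measurable_id.pow_const _).ennreal_ofReal fun t ht ↦
            (Measure.restrict_le_self _).trans (measure_setOf_lt_infDist_rpow_le hβ hvol ht₀ ht)
      _ < ⊤ := (integrableOn_Ioi_rpow_of_lt hq hlam).lintegral_lt_top

end DistanceIntegral

section Minkowski

variable {N : ℕ} {A : Set (EuclideanSpace ℝ (Fin N))}

theorem upperMinkowskiContent_eq_zero_of_lt (hA : Bornology.IsBounded A) {r : ℝ}
    (hr : N < r) : upperMinkowskiContent N A r = 0 := by
  have hV : volume (thickening 1 A) ≠ ⊤ := hA.thickening.measure_lt_top.ne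
  have hpow : Tendsto (fun t : ℝ ↦ ENNReal.ofReal (t ^ (r - N))) (𝓝[>] 0) (𝓝 0) := by
    have := (Real.continuousAt_rpow_const 0 (r - N) (Or.inr (by linarith))).tendsto
    rw [Real.zero_rpow (by linarith)] at this
    simpa using ENNReal.tendsto_ofReal (this.mono_left nhdsWithin_le_nhds)
  refine tendsto_of_tendsto_of_tendsto_of_le_of_le' tendsto_const_nhds
    (by simpa using ENNReal.Tendsto.const_mul hpow (Or.inr hV))
    (Eventually.of_forall fun _ ↦ zero_le) ?_ |>.limsup_eq
  filter_upwards [Ioo_mem_nhdsGT (zero_lt_one' ℝ)] with t ht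
  rw [show (N : ℝ) - r = -(r - N) by ring, Real.rpow_neg ht.1.le,
    ENNReal.ofReal_inv_of_pos (Real.rpow_pos_of_pos ht.1 _), div_eq_mul_inv, inv_inv]
  exact mul_le_mul_left (measure_mono (thickening_mono ht.2.le A)) _

theorem exists_lt_upperMinkowskiContent_eq_zero (hA : Bornology.IsBounded A) {σ : ℝ}
    (hσ : upperBoxDim N A < σ) : ∃ r < σ, upperMinkowskiContent N A r = 0 := by
  set S := {r : ℝ | upperMinkowskiContent N A r = 0}
  have hS : S.Nonempty := ⟨N + 1, upperMinkowskiContent_eq_zero_of_lt hA (lt_add_one _)⟩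
  by_cases hbdd : BddBelow S
  · obtain ⟨r, hrS, hr⟩ := (csInf_lt_iff hbdd hS).mp hσ
    exact ⟨r, hr, hrS⟩
  · obtain ⟨r, hrS, hr⟩ := not_bddBelow_iff.mp hbdd σ
    exact ⟨r, hr, hrS⟩

theorem eventually_volume_thickening_le_of_upperMinkowskiContent_eq_zero {r : ℝ}
    (hr : upperMinkowskiContent N A r = 0) :
    ∀ᶠ t in 𝓝[>] 0, volume (thickening t A) ≤ ENNReal.ofReal (t ^ ((N : ℝ) - r)) := by
  have hlt : ∀ᶠ t in 𝓝[>] 0,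
      volume (thickening t A) / ENNReal.ofReal (t ^ ((N : ℝ) - r)) < 1 :=
    eventually_lt_of_limsup_lt (by rw [← upperMinkowskiContent, hr]; exact zero_lt_one)
  filter_upwards [hlt, self_mem_nhdsWithin] with t ht (htpos : 0 < t)
  have hne : ENNReal.ofReal (t ^ ((N : ℝ) - r)) ≠ 0 := by
    simpa using Real.rpow_pos_of_pos htpos _
  simpa using ((ENNReal.div_lt_iff (Or.inl hne) (Or.inl ENNReal.ofReal_ne_top)).mp ht).le

end Minkowski

theorem stmt_1_general (N : ℕ) (A : Set (EuclideanSpace ℝ (Fin N)))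
    (hAb : Bornology.IsBounded A) (δ : ℝ) (s : ℂ)
    (hs : upperBoxDim N A < s.re) :
    ∫⁻ x in Metric.thickening δ A, ENNReal.ofReal (Metric.infDist x A ^ (s.re - N)) < ⊤ := by
  have hδ : volume (thickening δ A) < ⊤ := hAb.thickening.measure_lt_top
  rcases le_or_gt 0 (s.re - N) with hβ | hβ
  · exact lintegral_thickening_infDist_rpow_lt_top_of_nonneg hδ hβ
  · obtain ⟨r, hr, hr0⟩ := exists_lt_upperMinkowskiContent_eq_zero hAb hs
    exact lintegral_thickening_infDist_rpow_lt_top_of_neg hδ hβ (by linarith)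
      (eventually_volume_thickening_le_of_upperMinkowskiContent_eq_zero hr0)

/-- For `Re s > dim_B̄ A`, the distance zeta function integral converges absolutely:
`∫_{A_δ} d(x,A)^{Re s - N} dx < ∞`. -/
theorem stmt_1 (N : ℕ) (A : Set (EuclideanSpace ℝ (Fin N))) (hA : A.Nonempty)
    (hAb : Bornology.IsBounded A) (δ : ℝ) (hδ : 0 < δ) (s : ℂ)
    (hs : upperBoxDim N A < s.re) :
    ∫⁻ x in Metric.thickening δ A, ENNReal.ofReal (Metric.infDist x A ^ (s.re - N)) < ⊤ :=
  stmt_1_general N A hAb δ s hs
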